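/- arXiv:2207.04851 — 3 statements merged into one kernel-verified Lean document; each statement's English description precedes it below -/
import Mathlib

section
/- Suppose m₁ = m₂. Then for any x ∈ 𝒟 one has S(γ₁(−t)) = γ₂(t) for all t ∈ ℝ, where γ₁ and γ₂ denote the solutions of (*) with initial conditions x and S(x), respectively. -/
/-!
For `m₁ = m₂` one has `θ* = π/4`, and the involution `S` composed with time reversal maps
solutions of (*) to solutions. The vector field of (*) is `C¹`, hence locally Lipschitz, so a
solution is determined by its value at `t = 0`; `S(γ₁(-·))` and `γ₂` agree there.
-/

/-- The constant `m = m₁ + m₂ + 2/g`. -/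
noncomputable def mconst (g m₁ m₂ : ℕ) : ℝ := (m₁ : ℝ) + (m₂ : ℝ) + 2 / (g : ℝ)

/-- The angle `θ* = arctan √(m₁/m₂)`. -/
noncomputable def thetaStar (m₁ m₂ : ℕ) : ℝ :=
  Real.arctan (Real.sqrt ((m₁ : ℝ) / (m₂ : ℝ)))

/-- `l(θ) = m₁ cos² θ - m₂ sin² θ`. -/
noncomputable def lfun (m₁ m₂ : ℕ) (θ : ℝ) : ℝ :=
  (m₁ : ℝ) * Real.cos θ ^ 2 - (m₂ : ℝ) * Real.sin θ ^ 2

/-- `(ξ, θ, α)` is a (globally defined) solution of the ODE system (*):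
`ξ' = cos α · sin 2θ`, `θ' = sin α · sin 2θ`,
`α' = sin α · sin 2θ · (exp((4/g)ξ) - m) + 2 cos α · l(θ)`. -/
def IsSolution (g m₁ m₂ : ℕ) (ξ θ α : ℝ → ℝ) : Prop :=
  ∀ t : ℝ,
    HasDerivAt ξ (Real.cos (α t) * Real.sin (2 * θ t)) t ∧
    HasDerivAt θ (Real.sin (α t) * Real.sin (2 * θ t)) t ∧
    HasDerivAt α
      (Real.sin (α t) * Real.sin (2 * θ t) *
          (Real.exp (4 / (g : ℝ) * ξ t) - mconst g m₁ m₂) +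
        2 * Real.cos (α t) * lfun m₁ m₂ (θ t)) t

open Real Set Filter Topology

/-- The set where the two solutions agree is closed, open by local uniqueness, and nonempty. -/
theorem ODE_solution_unique_univ_of_locallyLipschitz {E : Type*} [NormedAddCommGroup E]
    [NormedSpace ℝ E] {v : E → E} (hv : LocallyLipschitz v) {f g : ℝ → E}
    (hf : ∀ t, HasDerivAt f (v (f t)) t) (hg : ∀ t, HasDerivAt g (v (g t)) t) {t₀ : ℝ}
    (heq : f t₀ = g t₀) : f = g := by
  have hfc : Continuous f := continuous_iff_continuousAt.2 fun t => (hf t).continuousAt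
  have hgc : Continuous g := continuous_iff_continuousAt.2 fun t => (hg t).continuousAt
  have hopen : IsOpen {t | f t = g t} := isOpen_iff_mem_nhds.2 fun t (ht : f t = g t) => by
    obtain ⟨K, s, hs, hK⟩ := hv (f t)
    exact ODE_solution_unique_of_eventually (v := fun _ => v) (s := fun _ => s)
      (.of_forall fun _ => hK) ((Eventually.of_forall hf).and (hfc.continuousAt hs))
      ((Eventually.of_forall hg).and (hgc.continuousAt (ht ▸ hs))) ht
  have hclopen : {t | f t = g t} = univ :=
    IsClopen.eq_univ ⟨isClosed_eq hfc hgc, hopen⟩ ⟨t₀, heq⟩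
  exact funext fun t => eq_univ_iff_forall.1 hclopen t

theorem HasDerivAt.comp_neg {𝕜 F : Type*} [NontriviallyNormedField 𝕜] [NormedAddCommGroup F]
    [NormedSpace 𝕜 F] {f : 𝕜 → F} {f' : F} {x : 𝕜} (hf : HasDerivAt f f' (-x)) :
    HasDerivAt (fun y => f (-y)) (-f') x := by
  simpa [Function.comp_def] using hf.scomp x (hasDerivAt_neg x)

noncomputable def odeField (g m₁ m₂ : ℕ) (p : ℝ × ℝ × ℝ) : ℝ × ℝ × ℝ :=
  (cos p.2.2 * sin (2 * p.2.1),
   sin p.2.2 * sin (2 * p.2.1),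
   sin p.2.2 * sin (2 * p.2.1) * (exp (4 / (g : ℝ) * p.1) - mconst g m₁ m₂) +
     2 * cos p.2.2 * lfun m₁ m₂ p.2.1)

theorem contDiff_odeField (g m₁ m₂ : ℕ) : ContDiff ℝ 1 (odeField g m₁ m₂) := by
  unfold odeField lfun
  fun_prop

namespace IsSolution

variable {g m₁ m₂ : ℕ} {ξ θ α : ℝ → ℝ}

theorem hasDerivAt_odeField (h : IsSolution g m₁ m₂ ξ θ α) (t : ℝ) :
    HasDerivAt (fun s => (ξ s, θ s, α s)) (odeField g m₁ m₂ (ξ t, θ t, α t)) t :=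
  let ⟨hξ, hθ, hα⟩ := h t
  hξ.prodMk (hθ.prodMk hα)

theorem eq_of_eq_at {ξ' θ' α' : ℝ → ℝ} (h : IsSolution g m₁ m₂ ξ θ α)
    (h' : IsSolution g m₁ m₂ ξ' θ' α') {t₀ : ℝ}
    (h₀ : ξ t₀ = ξ' t₀ ∧ θ t₀ = θ' t₀ ∧ α t₀ = α' t₀) : ξ = ξ' ∧ θ = θ' ∧ α = α' := by
  have := ODE_solution_unique_univ_of_locallyLipschitz
    (contDiff_odeField g m₁ m₂).locallyLipschitz h.hasDerivAt_odeField h'.hasDerivAt_odeField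
    (t₀ := t₀) (by simp only [h₀])
  simp only [funext_iff, Prod.mk.injEq] at this
  exact ⟨funext fun t => (this t).1, funext fun t => (this t).2.1, funext fun t => (this t).2.2⟩

/-- `θ ↦ π/2 - θ` preserves `sin 2θ` and flips the sign of `l`, `α ↦ π - α` preserves `sin α`
and flips `cos α`; together with time reversal this reproduces (*). -/
theorem reflect {m : ℕ} (h : IsSolution g m m ξ θ α) :
    IsSolution g m m (fun t => ξ (-t)) (fun t => π / 2 - θ (-t)) (fun t => π - α (-t)) := by
  intro t
  obtain ⟨hξ, hθ, hα⟩ := h (-t)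
  have h2θ : sin (2 * (π / 2 - θ (-t))) = sin (2 * θ (-t)) := by
    rw [show 2 * (π / 2 - θ (-t)) = π - 2 * θ (-t) by ring, sin_pi_sub]
  have hl : lfun m m (π / 2 - θ (-t)) = -lfun m m (θ (-t)) := by
    simp only [lfun, cos_pi_div_two_sub, sin_pi_div_two_sub]
    ring
  simp only [h2θ, hl, sin_pi_sub, cos_pi_sub]
  refine ⟨?_, ?_, ?_⟩
  · simpa using hξ.comp_neg
  · simpa using hθ.comp_neg.const_sub (π / 2)
  · exact (hα.comp_neg.const_sub π).congr_deriv (by ring)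

end IsSolution

theorem thetaStar_self {m : ℕ} (hm : 0 < m) : thetaStar m m = π / 4 := by
  rw [thetaStar, div_self (by positivity), sqrt_one, arctan_one]

theorem stmt4_general (g m₁ m₂ : ℕ)
    (hm₁ : 0 < m₁)
    (hm : m₁ = m₂) (a b c : ℝ)
    (ξ₁ θ₁ α₁ ξ₂ θ₂ α₂ : ℝ → ℝ)
    (h1 : IsSolution g m₁ m₂ ξ₁ θ₁ α₁)
    (h1i : ξ₁ 0 = a ∧ θ₁ 0 = b ∧ α₁ 0 = c)
    (h2 : IsSolution g m₁ m₂ ξ₂ θ₂ α₂)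
    (h2i : ξ₂ 0 = a ∧ θ₂ 0 = 2 * thetaStar m₁ m₂ - b ∧ α₂ 0 = Real.pi - c) :
    ∀ t : ℝ, ξ₂ t = ξ₁ (-t) ∧ θ₂ t = 2 * thetaStar m₁ m₂ - θ₁ (-t) ∧
      α₂ t = Real.pi - α₁ (-t) := by
  subst hm
  have hθstar : 2 * thetaStar m₁ m₁ = π / 2 := by rw [thetaStar_self hm₁]; ring
  rw [hθstar] at h2i ⊢
  obtain ⟨hξ, hθ, hα⟩ := h2.eq_of_eq_at h1.reflect (t₀ := 0) (by simp [h1i, h2i])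
  exact fun t => ⟨congrFun hξ t, congrFun hθ t, congrFun hα t⟩

/-- If `m₁ = m₂` then the involution `S(ξ, θ, α) = (ξ, 2θ* - θ, π - α)`
conjugates time-reversed solutions of (*) to solutions: if `γ₁, γ₂` are the
solutions with initial conditions `x ∈ 𝒟` and `S(x)` respectively, then
`S(γ₁(-t)) = γ₂(t)` for all `t`. -/
theorem stmt4 (g m₁ m₂ : ℕ) (hg : g = 1 ∨ g = 2 ∨ g = 3 ∨ g = 4 ∨ g = 6)
    (hm₁ : 0 < m₁) (hm₂ : 0 < m₂)
    (hm : m₁ = m₂) (a b c : ℝ) (hb : b ∈ Set.Ioo 0 (Real.pi / 2))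
    (ξ₁ θ₁ α₁ ξ₂ θ₂ α₂ : ℝ → ℝ)
    (h1 : IsSolution g m₁ m₂ ξ₁ θ₁ α₁)
    (h1i : ξ₁ 0 = a ∧ θ₁ 0 = b ∧ α₁ 0 = c)
    (h2 : IsSolution g m₁ m₂ ξ₂ θ₂ α₂)
    (h2i : ξ₂ 0 = a ∧ θ₂ 0 = 2 * thetaStar m₁ m₂ - b ∧ α₂ 0 = Real.pi - c) :
    ∀ t : ℝ, ξ₂ t = ξ₁ (-t) ∧ θ₂ t = 2 * thetaStar m₁ m₂ - θ₁ (-t) ∧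
      α₂ t = Real.pi - α₁ (-t) :=
  stmt4_general g m₁ m₂ hm₁ hm a b c ξ₁ θ₁ α₁ ξ₂ θ₂ α₂ h1 h1i h2 h2i
end

section
/- If ξ₀ is large enough then there is a time T₁ > 0 such that the solution (ξ_{ξ₀}, θ_{ξ₀}, α_{ξ₀}) of (*) with initial condition (ξ₀, θ*, π/2) satisfies ξ'_{ξ₀}(T₁)/θ'_{ξ₀}(T₁) = −1 while θ'_{ξ₀}(t) > 0 and ξ'_{ξ₀}(t) < 0 for all t ∈ (0, T₁]. -/
/-- `Ξ Θ A` is the family of solutions of (*) indexed by the initial value `ξ₀`,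
with initial condition `(ξ, θ, α)(0) = (ξ₀, θ*, π/2)`. -/
def IsShootingFamily (g m₁ m₂ : ℕ) (Ξ Θ A : ℝ → ℝ → ℝ) : Prop :=
  ∀ ξ₀ : ℝ, IsSolution g m₁ m₂ (Ξ ξ₀) (Θ ξ₀) (A ξ₀) ∧
    Ξ ξ₀ 0 = ξ₀ ∧ Θ ξ₀ 0 = thetaStar m₁ m₂ ∧ A ξ₀ 0 = Real.pi / 2

/-- `ξ₀` is of type 1: there is `T > 0` with `θ_{ξ₀}(T) = θ*` and
`ξ'_{ξ₀}(t) ≠ 0` for all `t ∈ (0, T)`. -/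
def Type1 (m₁ m₂ : ℕ) (Ξ Θ A : ℝ → ℝ → ℝ) (ξ₀ : ℝ) : Prop :=
  ∃ T > (0 : ℝ), Θ ξ₀ T = thetaStar m₁ m₂ ∧
    ∀ t ∈ Set.Ioo (0 : ℝ) T, Real.cos (A ξ₀ t) * Real.sin (2 * Θ ξ₀ t) ≠ 0

/-!
As long as `α ∈ [π/2, 3π/4]`, the equation for `α'` is dominated by the term
`sin α · sin 2θ · exp((4/g) ξ)`: since `ξ` and `sin 2θ` move at speed at most `1` and `2`, they
stay above `ξ₀ - 1` and `sin 2θ* / 2 > 0` for the fixed time `sin 2θ* / 4`. For `ξ₀` large this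
makes `α' > π / sin 2θ*` there, so comparing with the line `π/2 + t π / sin 2θ*` shows that `α`
reaches `3π/4` within that time. At the first such time `T₁` we get `ξ'/θ' = cot α = -1`, and
before it `α ∈ (π/2, 3π/4)` gives `θ' > 0 > ξ'`.
-/

open Real Set Filter

lemma abs_sub_le_mul_of_abs_deriv_le {f f' : ℝ → ℝ} {C t : ℝ}
    (hf : ∀ s, HasDerivAt f (f' s) s) (hC : ∀ s, |f' s| ≤ C) (ht : 0 ≤ t) :
    |f t - f 0| ≤ C * t := by
  simpa using norm_image_sub_le_of_norm_deriv_le_segment'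
    (fun s _ => (hf s).hasDerivWithinAt) (fun s _ => by simpa using hC s) t ⟨ht, le_rfl⟩

lemma add_mul_le_of_lt_deriv_at_contact {f f' : ℝ → ℝ} {c K T : ℝ}
    (hf : ∀ t, HasDerivAt f (f' t) t) (h0 : c ≤ f 0)
    (hcontact : ∀ t ∈ Ico 0 T, f t = c + K * t → K < f' t) :
    ∀ t ∈ Icc 0 T, c + K * t ≤ f t := by
  refine image_le_of_deriv_right_lt_deriv_boundary (f := fun t => c + K * t) (f' := fun _ => K)
    (by fun_prop) (fun s _ => ?_) (by simpa using h0) hf fun s hs hs' => hcontact s hs hs'.symm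
  simpa using (((hasDerivAt_id s).const_mul K).const_add c).hasDerivWithinAt

lemma exists_first_eq_of_continuousOn {f : ℝ → ℝ} {a b c : ℝ} (hab : a ≤ b)
    (hf : ContinuousOn f (Icc a b)) (ha : f a < c) (hb : c ≤ f b) :
    ∃ T ∈ Ioc a b, f T = c ∧ ∀ t ∈ Ico a T, f t < c := by
  have hS : IsCompact (Icc a b ∩ f ⁻¹' Ici c) :=
    isCompact_Icc.of_isClosed_subset (hf.preimage_isClosed_of_isClosed isClosed_Icc isClosed_Ici)
      inter_subset_left
  obtain ⟨T, ⟨⟨haT, hTb⟩, hcT⟩, hleast⟩ :=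
    hS.exists_isLeast ⟨b, ⟨⟨hab, le_rfl⟩, hb⟩⟩
  have hbefore : ∀ t ∈ Ico a T, f t < c := fun t ht =>
    not_le.1 fun hct => (hleast ⟨⟨ht.1, ht.2.le.trans hTb⟩, hct⟩).not_gt ht.2
  have haT' : a < T := haT.lt_of_ne fun h => (h ▸ ha).not_ge hcT
  obtain ⟨s, hs, hfs⟩ := intermediate_value_Icc haT (hf.mono (Icc_subset_Icc le_rfl hTb))
    ⟨ha.le, hcT⟩
  obtain rfl : s = T := hs.2.eq_of_not_lt fun hsT => (hbefore s ⟨hs.1, hsT⟩).ne hfs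
  exact ⟨s, ⟨haT', hTb⟩, hfs, hbefore⟩

lemma sqrt_two_div_two_le_sin {a : ℝ} (h₁ : π / 2 ≤ a) (h₂ : a ≤ 3 * π / 4) :
    √2 / 2 ≤ sin a := by
  rw [← cos_sub_pi_div_two, ← cos_pi_div_four]
  exact cos_le_cos_of_nonneg_of_le_pi (by linarith) (by linarith [pi_pos]) (by linarith)

lemma sin_two_mul_thetaStar_pos {m₁ m₂ : ℕ} (hm₁ : 0 < m₁) (hm₂ : 0 < m₂) :
    0 < sin (2 * thetaStar m₁ m₂) := by
  have h₀ : 0 < thetaStar m₁ m₂ := arctan_pos.2 (sqrt_pos.2 (by positivity))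
  have h₁ : thetaStar m₁ m₂ < π / 2 := arctan_lt_pi_div_two _
  exact sin_pos_of_pos_of_lt_pi (by linarith) (by linarith)

lemma abs_lfun_le (m₁ m₂ : ℕ) (y : ℝ) : |lfun m₁ m₂ y| ≤ m₁ + m₂ := by
  have := sin_sq_add_cos_sq y
  rw [abs_le, lfun]
  constructor <;> nlinarith [sq_nonneg (sin y), sq_nonneg (cos y), m₁.cast_nonneg (α := ℝ),
    m₂.cast_nonneg (α := ℝ)]

lemma lt_alpha_rhs {g m₁ m₂ : ℕ} {K c s a y x : ℝ} (hK : 0 ≤ K) (hc : 0 < c) (hs : 0 < s)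
    (ha : c ≤ sin a) (hy : s ≤ sin (2 * y))
    (hx : mconst g m₁ m₂ + (K + 2 * (m₁ + m₂)) / (c * s) < exp (4 / g * x)) :
    K < sin a * sin (2 * y) * (exp (4 / g * x) - mconst g m₁ m₂) +
      2 * cos a * lfun m₁ m₂ y := by
  have hl : |2 * cos a * lfun m₁ m₂ y| ≤ 2 * (m₁ + m₂) := by
    rw [abs_mul, abs_mul, abs_two]
    gcongr
    · exact mul_le_of_le_one_right zero_le_two (abs_cos_le_one a)
    · exact abs_lfun_le m₁ m₂ y
  have hquot : 0 ≤ (K + 2 * (m₁ + m₂)) / (c * s) := by positivity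
  have hmain : K + 2 * (m₁ + m₂) < sin a * sin (2 * y) * (exp (4 / g * x) - mconst g m₁ m₂) :=
    calc K + 2 * (m₁ + m₂) = c * s * ((K + 2 * (m₁ + m₂)) / (c * s)) := by field_simp
      _ < c * s * (exp (4 / g * x) - mconst g m₁ m₂) := by gcongr; linarith
      _ ≤ sin a * sin (2 * y) * (exp (4 / g * x) - mconst g m₁ m₂) := by
        gcongr
        · linarith
        · exact hc.le.trans ha
  linarith [(abs_le.1 hl).1]

namespace IsSolution

variable {g m₁ m₂ : ℕ} {ξ θ α : ℝ → ℝ}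

lemma continuous_alpha (h : IsSolution g m₁ m₂ ξ θ α) : Continuous α :=
  continuous_iff_continuousAt.2 fun t => (h t).2.2.continuousAt

lemma sub_le_xi (h : IsSolution g m₁ m₂ ξ θ α) {t : ℝ} (ht : 0 ≤ t) : ξ 0 - t ≤ ξ t := by
  have := abs_sub_le_mul_of_abs_deriv_le (C := 1) (fun s => (h s).1) (fun s => ?_) ht
  · linarith [(abs_le.1 this).1]
  · rw [abs_mul]
    exact mul_le_one₀ (abs_cos_le_one _) (abs_nonneg _) (abs_sin_le_one _)

lemma sub_le_sin_two_mul_theta (h : IsSolution g m₁ m₂ ξ θ α) {t : ℝ} (ht : 0 ≤ t) :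
    sin (2 * θ 0) - 2 * t ≤ sin (2 * θ t) := by
  have := abs_sub_le_mul_of_abs_deriv_le (C := 2) (fun s => (((h s).2.1).const_mul 2).sin)
    (fun s => ?_) ht
  · linarith [(abs_le.1 this).1]
  · rw [abs_mul, abs_mul, abs_mul, abs_two]
    have := mul_le_one₀ (abs_sin_le_one (α s)) (abs_nonneg _) (abs_sin_le_one (2 * θ s))
    nlinarith [abs_cos_le_one (2 * θ s), abs_nonneg (cos (2 * θ s))]

theorem exists_first_alpha_eq_three_pi_div_four (h : IsSolution g m₁ m₂ ξ θ α)
    (hθ : 0 < sin (2 * θ 0)) (hα : α 0 = π / 2)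
    (hξ : mconst g m₁ m₂ + (π / sin (2 * θ 0) + 2 * (m₁ + m₂)) / (√2 / 2 * (sin (2 * θ 0) / 2))
      < exp (4 / g * (ξ 0 - 1))) :
    ∃ T₁ > 0, α T₁ = 3 * π / 4 ∧
      ∀ t ∈ Ioc 0 T₁, α t ∈ Ioc (π / 2) (3 * π / 4) ∧ 0 < sin (2 * θ t) := by
  set s₀ := sin (2 * θ 0)
  have hs₀ : s₀ ≤ 1 := sin_le_one _
  have hsin : ∀ t ∈ Icc 0 (s₀ / 4), s₀ / 2 ≤ sin (2 * θ t) := fun t ht => by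
    linarith [h.sub_le_sin_two_mul_theta ht.1, ht.2]
  have hexp : ∀ t ∈ Icc 0 (s₀ / 4), exp (4 / g * (ξ 0 - 1)) ≤ exp (4 / g * ξ t) := fun t ht =>
    exp_le_exp.2 (mul_le_mul_of_nonneg_left (by linarith [h.sub_le_xi ht.1, ht.2]) (by positivity))
  have hslope : π / s₀ * (s₀ / 4) = π / 4 := by field_simp
  have hbarrier : ∀ t ∈ Icc 0 (s₀ / 4), π / 2 + π / s₀ * t ≤ α t := by
    refine add_mul_le_of_lt_deriv_at_contact (fun t => (h t).2.2) hα.ge fun t ht hαt => ?_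
    have hπt : π / s₀ * t ≤ π / 4 := hslope ▸ by gcongr; exact ht.2.le
    have hπt₀ : 0 ≤ π / s₀ * t := by have := ht.1; positivity
    exact lt_alpha_rhs (by positivity) (by positivity) (by positivity)
      (sqrt_two_div_two_le_sin (by linarith) (by linarith)) (hsin t (Ico_subset_Icc_self ht))
      (hξ.trans_le (hexp t (Ico_subset_Icc_self ht)))
  have hend : 3 * π / 4 ≤ α (s₀ / 4) := by
    have := hbarrier (s₀ / 4) ⟨by positivity, le_rfl⟩
    linarith
  obtain ⟨T₁, ⟨hT₁, hT₁le⟩, hαT₁, hbefore⟩ := exists_first_eq_of_continuousOn (by positivity)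
    h.continuous_alpha.continuousOn (by rw [hα]; linarith [pi_pos]) hend
  refine ⟨T₁, hT₁, hαT₁, fun t ⟨ht, htT₁⟩ => ⟨⟨?_, ?_⟩, ?_⟩⟩
  · have := hbarrier t ⟨ht.le, htT₁.trans hT₁le⟩
    have : 0 < π / s₀ * t := by positivity
    linarith
  · rcases htT₁.lt_or_eq with htT₁ | rfl
    · exact (hbefore t ⟨ht.le, htT₁⟩).le
    · exact hαT₁.le
  · linarith [hsin t ⟨ht.le, htT₁.trans hT₁le⟩]

end IsSolution

/-- Lemma 4.3: for `ξ₀` large enough there is a time `T₁ > 0` with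
`ξ'(T₁)/θ'(T₁) = -1`, while `θ' > 0` and `ξ' < 0` on `(0, T₁]`. -/
theorem stmt15 (g m₁ m₂ : ℕ) (hg : g = 1 ∨ g = 2 ∨ g = 3 ∨ g = 4 ∨ g = 6)
    (hm₁ : 0 < m₁) (hm₂ : 0 < m₂)
    (Ξ Θ A : ℝ → ℝ → ℝ) (hfam : IsShootingFamily g m₁ m₂ Ξ Θ A) :
    ∃ R : ℝ, ∀ ξ₀ > R, ∃ T₁ > (0 : ℝ),
      (Real.cos (A ξ₀ T₁) * Real.sin (2 * Θ ξ₀ T₁)) /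
          (Real.sin (A ξ₀ T₁) * Real.sin (2 * Θ ξ₀ T₁)) = -1 ∧
      ∀ t ∈ Set.Ioc (0 : ℝ) T₁,
        0 < Real.sin (A ξ₀ t) * Real.sin (2 * Θ ξ₀ t) ∧
        Real.cos (A ξ₀ t) * Real.sin (2 * Θ ξ₀ t) < 0 := by
  have hg₀ : (0 : ℝ) < g := by rcases hg with rfl | rfl | rfl | rfl | rfl <;> norm_num
  have hgrowth : Tendsto (fun ξ₀ : ℝ => exp (4 / g * (ξ₀ - 1))) atTop atTop :=
    tendsto_exp_atTop.comp
      ((tendsto_atTop_add_const_right _ (-1) tendsto_id).const_mul_atTop (by positivity))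
  obtain ⟨R, hR⟩ := eventually_atTop.1 (hgrowth.eventually_gt_atTop _)
  refine ⟨R, fun ξ₀ hξ₀ => ?_⟩
  obtain ⟨hsol, hξ, hθ, hα⟩ := hfam ξ₀
  obtain ⟨T₁, hT₁, hαT₁, hbetween⟩ := hsol.exists_first_alpha_eq_three_pi_div_four
    (by rw [hθ]; exact sin_two_mul_thetaStar_pos hm₁ hm₂) hα
    (by rw [hξ, hθ]; exact hR ξ₀ hξ₀.le)
  refine ⟨T₁, hT₁, ?_, fun t ht => ?_⟩
  · have h3π4 : 3 * π / 4 = π - π / 4 := by ring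
    rw [mul_div_mul_right _ _ (hbetween T₁ ⟨hT₁, le_rfl⟩).2.ne', hαT₁, h3π4, cos_pi_sub,
      sin_pi_sub, cos_pi_div_four, sin_pi_div_four, neg_div, div_self (by positivity)]
  · obtain ⟨⟨hlo, hhi⟩, hsin⟩ := hbetween t ht
    exact ⟨mul_pos (sin_pos_of_pos_of_lt_pi (by linarith [pi_pos]) (by linarith [pi_pos])) hsin,
      mul_neg_of_neg_of_pos (cos_neg_of_pi_div_two_lt_of_lt hlo (by linarith [pi_pos])) hsin⟩
end

section
/- There exists ε₀ > 0 such that for every ε ∈ (0, ε₀): if ξ₀ = (g/4)·ln(m) + ε is of type 1 and T₁ is a time with ξ'_{ξ₀}(T₁)/θ'_{ξ₀}(T₁) = −1 while ξ'_{ξ₀}(t) < 0 and θ'_{ξ₀}(t) > 0 for all t ∈ (0, T₁], then ξ_{ξ₀}(T₁) ≤ (g/4)·ln(m). -/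
/-!
Write `u = -ξ'/θ' = -cot α` and `W = sin^m₁ θ · cos^m₂ θ`, and suppose `ξ(T₁) > (g/4) log m`.
Since `ξ` decreases, `X = exp(4ξ/g) - m` stays in `(0, δ]` on `[0, T₁]` with `δ = O(ε)`.
Along (*), `ξ' = -u θ'`, `u' = (X sin 2θ - 2u l(θ)) / sin α` and `W' = 2 l(θ) sin α · W`, with
`l(θ) ≤ 0` for `θ ≥ θ*`; so `u` increases from `0` to `1` and `sin² α ≥ 1/2`.

Then `u W² - 2δθ` decreases, so `W(θ(T₁))² ≤ πδ` and `θ` passes `θ₁ = (θ* + π/2)/2` at some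
`t₁`. If `ξ` drops by `ε - a` on `[0, t₁]`, then `u(t₁)(θ₁ - θ*) ≥ ε - a`, while `X ≥ 4ma/g`
there gives `u(t₁) ≥ (4ma/g)(θ₁ - θ*)`; either way `u(t₁) ≳ ε`. After `t₁`, `u W` increases and
`W ≤ cos θ`, so `ξ(t₁) - ξ(T₁) ≥ u(t₁) W(θ₁) log (cos θ₁ / cos θ(T₁)) ≳ ε log (1/δ)`, which
exceeds `ε` for small `ε`, although `ξ(t₁) - ξ(T₁) < ε`.
-/

open Real Set Filter Topology

lemma monotoneOn_Icc_of_hasDerivAt {f f' : ℝ → ℝ} {a b : ℝ}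
    (hf : ∀ t ∈ Icc a b, HasDerivAt f (f' t) t) (hf' : ∀ t ∈ Icc a b, 0 ≤ f' t) :
    MonotoneOn f (Icc a b) :=
  monotoneOn_of_hasDerivWithinAt_nonneg (convex_Icc a b)
    (fun t ht => (hf t ht).continuousAt.continuousWithinAt)
    (fun t ht => (hf t (interior_subset ht)).hasDerivWithinAt)
    (fun t ht => hf' t (interior_subset ht))

lemma antitoneOn_Icc_of_hasDerivAt {f f' : ℝ → ℝ} {a b : ℝ}
    (hf : ∀ t ∈ Icc a b, HasDerivAt f (f' t) t) (hf' : ∀ t ∈ Icc a b, f' t ≤ 0) :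
    AntitoneOn f (Icc a b) :=
  antitoneOn_of_hasDerivWithinAt_nonpos (convex_Icc a b)
    (fun t ht => (hf t ht).continuousAt.continuousWithinAt)
    (fun t ht => (hf t (interior_subset ht)).hasDerivWithinAt)
    (fun t ht => hf' t (interior_subset ht))

section Constants

variable {g m₁ m₂ : ℕ}

lemma thetaStar_nonneg : 0 ≤ thetaStar m₁ m₂ :=
  arctan_nonneg.2 (sqrt_nonneg _)

lemma thetaStar_pos (hm₁ : 0 < m₁) (hm₂ : 0 < m₂) : 0 < thetaStar m₁ m₂ := by
  rw [thetaStar, ← arctan_zero]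
  exact arctan_strictMono (sqrt_pos.2 (by positivity))

lemma thetaStar_lt_pi_div_two : thetaStar m₁ m₂ < π / 2 :=
  arctan_lt_pi_div_two _

lemma lfun_nonpos (hm₂ : 0 < m₂) {x : ℝ} (hτx : thetaStar m₁ m₂ ≤ x) (hx : x < π / 2) :
    lfun m₁ m₂ x ≤ 0 := by
  have hx₀ : 0 ≤ x := thetaStar_nonneg.trans hτx
  have hcos : 0 < cos x := cos_pos_of_mem_Ioo ⟨by linarith [pi_pos], hx⟩
  have htan : sqrt ((m₁ : ℝ) / m₂) ≤ tan x := by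
    rw [← tan_arctan (sqrt _)]
    exact strictMonoOn_tan.monotoneOn (arctan_mem_Ioo _) ⟨by linarith [pi_pos], hx⟩ hτx
  have hm₂' : (0 : ℝ) < m₂ := by exact_mod_cast hm₂
  have hsq : (m₁ : ℝ) / m₂ ≤ (sin x / cos x) ^ 2 := by
    rw [← tan_eq_sin_div_cos, ← sq_sqrt (by positivity : (0 : ℝ) ≤ m₁ / m₂)]
    exact pow_le_pow_left₀ (sqrt_nonneg _) htan 2
  rw [div_pow, div_le_div_iff₀ hm₂' (by positivity)] at hsq
  unfold lfun
  linarith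

noncomputable def thetaOne (m₁ m₂ : ℕ) : ℝ := (thetaStar m₁ m₂ + π / 2) / 2

lemma thetaStar_lt_thetaOne : thetaStar m₁ m₂ < thetaOne m₁ m₂ := by
  unfold thetaOne; linarith [thetaStar_lt_pi_div_two (m₁ := m₁) (m₂ := m₂)]

lemma thetaOne_lt_pi_div_two : thetaOne m₁ m₂ < π / 2 := by
  unfold thetaOne; linarith [thetaStar_lt_pi_div_two (m₁ := m₁) (m₂ := m₂)]

lemma sin_thetaStar_pos (hm₁ : 0 < m₁) (hm₂ : 0 < m₂) : 0 < sin (thetaStar m₁ m₂) :=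
  sin_pos_of_pos_of_lt_pi (thetaStar_pos hm₁ hm₂)
    (thetaStar_lt_pi_div_two.trans (by linarith [pi_pos]))

noncomputable def weight (m₁ m₂ : ℕ) (x : ℝ) : ℝ := sin x ^ m₁ * cos x ^ m₂

lemma weight_pos {x : ℝ} (hx₀ : 0 < x) (hx : x < π / 2) : 0 < weight m₁ m₂ x := by
  have := sin_pos_of_pos_of_lt_pi hx₀ (by linarith [pi_pos])
  have := cos_pos_of_mem_Ioo ⟨by linarith, hx⟩
  unfold weight; positivity

lemma weight_thetaOne_pos : 0 < weight m₁ m₂ (thetaOne m₁ m₂) :=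
  weight_pos (thetaStar_nonneg.trans_lt thetaStar_lt_thetaOne) thetaOne_lt_pi_div_two

lemma weight_le_cos (hm₂ : 0 < m₂) {x : ℝ} (hx₀ : 0 ≤ x) (hx : x ≤ π / 2) :
    weight m₁ m₂ x ≤ cos x := by
  have hcos := cos_nonneg_of_mem_Icc ⟨by linarith [pi_pos], hx⟩
  calc weight m₁ m₂ x ≤ 1 * cos x ^ 1 :=
        mul_le_mul (pow_le_one₀ (sin_nonneg_of_nonneg_of_le_pi hx₀ (by linarith)) (sin_le_one x))
          (pow_le_pow_of_le_one hcos (cos_le_one x) hm₂) (by positivity) zero_le_one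
    _ = cos x := by ring

lemma sin_thetaStar_pow_mul_le_weight_sq {x : ℝ} (hτx : thetaStar m₁ m₂ ≤ x) (hx : x ≤ π / 2) :
    sin (thetaStar m₁ m₂) ^ (2 * m₁) * cos x ^ (2 * m₂) ≤ weight m₁ m₂ x ^ 2 := by
  have hτ := thetaStar_nonneg (m₁ := m₁) (m₂ := m₂)
  have hsin : sin (thetaStar m₁ m₂) ≤ sin x :=
    sin_le_sin_of_le_of_le_pi_div_two (by linarith [pi_pos]) hx hτx
  have hcos := cos_nonneg_of_mem_Icc ⟨by linarith [pi_pos], hx⟩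
  rw [weight, mul_pow, ← pow_mul, ← pow_mul, mul_comm m₁, mul_comm m₂]
  gcongr
  exact sin_nonneg_of_nonneg_of_le_pi hτ (by linarith [pi_pos])

/-- `sin 2θ · (m₁ cot θ - m₂ tan θ) = 2 l(θ)`. -/
lemma hasDerivAt_weight_comp (hm₁ : 0 < m₁) (hm₂ : 0 < m₂) {θ : ℝ → ℝ} {a t : ℝ}
    (hθ : HasDerivAt θ (a * sin (2 * θ t)) t) :
    HasDerivAt (fun r => weight m₁ m₂ (θ r))
      (2 * a * lfun m₁ m₂ (θ t) * weight m₁ m₂ (θ t)) t := by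
  refine ((hθ.sin.pow m₁).mul (hθ.cos.pow m₂)).congr_deriv ?_
  obtain ⟨k, rfl⟩ : ∃ k, m₁ = k + 1 := ⟨m₁ - 1, by omega⟩
  obtain ⟨j, rfl⟩ : ∃ j, m₂ = j + 1 := ⟨m₂ - 1, by omega⟩
  simp only [weight, lfun, sin_two_mul, Nat.add_sub_cancel, Pi.pow_apply]
  push_cast
  ring

lemma mconst_pos (hg : 0 < g) : 0 < mconst g m₁ m₂ := by
  unfold mconst; positivity

noncomputable def threshold (g m₁ m₂ : ℕ) : ℝ := g / 4 * log (mconst g m₁ m₂)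

noncomputable def excess (g m₁ m₂ : ℕ) (x : ℝ) : ℝ := exp (4 / g * x) - mconst g m₁ m₂

lemma excess_eq (hg : 0 < g) (x : ℝ) :
    excess g m₁ m₂ x = mconst g m₁ m₂ * (exp (4 / g * (x - threshold g m₁ m₂)) - 1) := by
  have hg' : (g : ℝ) ≠ 0 := by positivity
  rw [excess, mul_sub, mul_one, ← exp_log (mconst_pos (m₁ := m₁) (m₂ := m₂) hg), ← exp_add,
    exp_log (mconst_pos hg), threshold]
  congr 2
  field_simp
  ring

lemma excess_monotone : Monotone (excess g m₁ m₂) := fun x y hxy => by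
  unfold excess
  gcongr

lemma excess_pos (hg : 0 < g) {x : ℝ} (hx : threshold g m₁ m₂ < x) : 0 < excess g m₁ m₂ x := by
  rw [excess_eq hg]
  have : 0 < 4 / (g : ℝ) * (x - threshold g m₁ m₂) := mul_pos (by positivity) (by linarith)
  exact mul_pos (mconst_pos hg) (by linarith [add_one_lt_exp this.ne'])

lemma mul_sub_threshold_le_excess (hg : 0 < g) (x : ℝ) :
    4 * mconst g m₁ m₂ / g * (x - threshold g m₁ m₂) ≤ excess g m₁ m₂ x := by
  rw [excess_eq hg]
  have := add_one_le_exp (4 / (g : ℝ) * (x - threshold g m₁ m₂))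
  calc 4 * mconst g m₁ m₂ / g * (x - threshold g m₁ m₂)
      = mconst g m₁ m₂ * (4 / g * (x - threshold g m₁ m₂)) := by ring
    _ ≤ _ := mul_le_mul_of_nonneg_left (by linarith) (mconst_pos hg).le

/-- `min_a max (c a d, (ε - a) / d) = seedConst · ε`, where `c = 4m/g` and `d = θ₁ - θ*`. -/
noncomputable def seedConst (g m₁ m₂ : ℕ) : ℝ :=
  4 * mconst g m₁ m₂ / g * (thetaOne m₁ m₂ - thetaStar m₁ m₂) /
    (1 + 4 * mconst g m₁ m₂ / g * (thetaOne m₁ m₂ - thetaStar m₁ m₂) ^ 2)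

lemma seedConst_pos (hg : 0 < g) : 0 < seedConst g m₁ m₂ := by
  have := mconst_pos (m₁ := m₁) (m₂ := m₂) hg
  have := sub_pos.2 (thetaStar_lt_thetaOne (m₁ := m₁) (m₂ := m₂))
  unfold seedConst; positivity

def IsSmallExcess (g m₁ m₂ : ℕ) (δ : ℝ) : Prop :=
  1 ≤ seedConst g m₁ m₂ * weight m₁ m₂ (thetaOne m₁ m₂) *
    (log (cos (thetaOne m₁ m₂)) - log (π * δ / sin (thetaStar m₁ m₂) ^ (2 * m₁)) / (2 * m₂))

end Constants

/-- `-ξ'/θ' = -cot α` along (*). -/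
noncomputable def descentRate (α : ℝ → ℝ) (t : ℝ) : ℝ := -cos (α t) / sin (α t)

lemma cos_eq_neg_descentRate_mul_sin {α : ℝ → ℝ} {t : ℝ} (hσ : sin (α t) ≠ 0) :
    cos (α t) = -(descentRate α t * sin (α t)) := by
  rw [descentRate]; field_simp

section Solution

variable {g m₁ m₂ : ℕ} {ξ θ α : ℝ → ℝ}

lemma IsSolution.continuous_theta (hsol : IsSolution g m₁ m₂ ξ θ α) : Continuous θ :=
  continuous_iff_continuousAt.2 fun t => (hsol t).2.1.continuousAt

lemma IsSolution.hasDerivAt_descentRate (hsol : IsSolution g m₁ m₂ ξ θ α) {t : ℝ}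
    (hσ : sin (α t) ≠ 0) :
    HasDerivAt (descentRate α) ((sin (2 * θ t) * excess g m₁ m₂ (ξ t) -
      2 * descentRate α t * lfun m₁ m₂ (θ t)) / sin (α t)) t := by
  refine ((hsol t).2.2.cos.neg.div (hsol t).2.2.sin hσ).congr_deriv ?_
  simp only [Pi.neg_apply, descentRate, excess]
  generalize exp (4 / g * ξ t) - mconst g m₁ m₂ = X
  field_simp
  linear_combination (sin (α t) * sin (2 * θ t) * X + 2 * cos (α t) * lfun m₁ m₂ (θ t)) *
    sin_sq_add_cos_sq (α t)

end Solution

structure IsDescendingArc (g m₁ m₂ : ℕ) (ξ θ α : ℝ → ℝ) (T : ℝ) : Prop where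
  solution : IsSolution g m₁ m₂ ξ θ α
  theta_zero : θ 0 = thetaStar m₁ m₂
  alpha_zero : α 0 = π / 2
  time_pos : 0 < T
  deriv_sign : ∀ t ∈ Ioc 0 T, cos (α t) * sin (2 * θ t) < 0 ∧ 0 < sin (α t) * sin (2 * θ t)

namespace IsDescendingArc

variable {g m₁ m₂ : ℕ} {ξ θ α : ℝ → ℝ} {T t : ℝ}

lemma sin_two_theta_pos (h : IsDescendingArc g m₁ m₂ ξ θ α T) (hm₁ : 0 < m₁) (hm₂ : 0 < m₂)
    (ht : t ∈ Icc 0 T) : 0 < sin (2 * θ t) := by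
  have hτ := thetaStar_pos hm₁ hm₂
  have h₀ : 0 < sin (2 * θ 0) := by
    rw [h.theta_zero]
    exact sin_pos_of_pos_of_lt_pi (by linarith)
      (by linarith [thetaStar_lt_pi_div_two (m₁ := m₁) (m₂ := m₂)])
  have hcont : Continuous fun r => sin (2 * θ r) := by
    have := h.solution.continuous_theta; fun_prop
  by_contra! hle
  obtain ⟨t', ht', hzero⟩ := intermediate_value_Icc' ht.1 hcont.continuousOn ⟨hle, h₀.le⟩
  rcases ht'.1.eq_or_lt with rfl | ht'₀
  · exact h₀.ne' hzero
  · have := (h.deriv_sign t' ⟨ht'₀, ht'.2.trans ht.2⟩).2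
    rw [show sin (2 * θ t') = 0 from hzero, mul_zero] at this
    exact this.false

lemma sin_alpha_pos (h : IsDescendingArc g m₁ m₂ ξ θ α T) (hm₁ : 0 < m₁) (hm₂ : 0 < m₂)
    (ht : t ∈ Icc 0 T) : 0 < sin (α t) := by
  rcases ht.1.eq_or_lt with rfl | ht₀
  · simp [h.alpha_zero]
  · exact pos_of_mul_pos_left (h.deriv_sign t ⟨ht₀, ht.2⟩).2 (h.sin_two_theta_pos hm₁ hm₂ ht).le

lemma cos_alpha_nonpos (h : IsDescendingArc g m₁ m₂ ξ θ α T) (hm₁ : 0 < m₁) (hm₂ : 0 < m₂)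
    (ht : t ∈ Icc 0 T) : cos (α t) ≤ 0 := by
  rcases ht.1.eq_or_lt with rfl | ht₀
  · simp [h.alpha_zero]
  · exact (neg_of_mul_neg_left (h.deriv_sign t ⟨ht₀, ht.2⟩).1
      (h.sin_two_theta_pos hm₁ hm₂ ht).le).le

lemma theta_monotoneOn (h : IsDescendingArc g m₁ m₂ ξ θ α T) (hm₁ : 0 < m₁) (hm₂ : 0 < m₂) :
    MonotoneOn θ (Icc 0 T) :=
  monotoneOn_Icc_of_hasDerivAt (fun t _ => (h.solution t).2.1)
    fun _ ht => (mul_pos (h.sin_alpha_pos hm₁ hm₂ ht) (h.sin_two_theta_pos hm₁ hm₂ ht)).le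

lemma xi_antitoneOn (h : IsDescendingArc g m₁ m₂ ξ θ α T) (hm₁ : 0 < m₁) (hm₂ : 0 < m₂) :
    AntitoneOn ξ (Icc 0 T) :=
  antitoneOn_Icc_of_hasDerivAt (fun t _ => (h.solution t).1)
    fun _ ht => mul_nonpos_of_nonpos_of_nonneg (h.cos_alpha_nonpos hm₁ hm₂ ht)
      (h.sin_two_theta_pos hm₁ hm₂ ht).le

lemma thetaStar_le_theta (h : IsDescendingArc g m₁ m₂ ξ θ α T) (hm₁ : 0 < m₁) (hm₂ : 0 < m₂)
    (ht : t ∈ Icc 0 T) : thetaStar m₁ m₂ ≤ θ t :=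
  h.theta_zero ▸ h.theta_monotoneOn hm₁ hm₂ (left_mem_Icc.2 h.time_pos.le) ht ht.1

lemma theta_lt_pi_div_two (h : IsDescendingArc g m₁ m₂ ξ θ α T) (hm₁ : 0 < m₁) (hm₂ : 0 < m₂)
    (ht : t ∈ Icc 0 T) : θ t < π / 2 := by
  by_contra! hle
  obtain ⟨t', ht', hθt'⟩ := intermediate_value_Icc ht.1 h.solution.continuous_theta.continuousOn
    ⟨h.theta_zero ▸ thetaStar_lt_pi_div_two.le, hle⟩
  have := h.sin_two_theta_pos hm₁ hm₂ ⟨ht'.1, ht'.2.trans ht.2⟩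
  rw [hθt', mul_div_cancel₀ _ two_ne_zero, sin_pi] at this
  exact this.false

lemma lfun_theta_nonpos (h : IsDescendingArc g m₁ m₂ ξ θ α T) (hm₁ : 0 < m₁) (hm₂ : 0 < m₂)
    (ht : t ∈ Icc 0 T) : lfun m₁ m₂ (θ t) ≤ 0 :=
  lfun_nonpos hm₂ (h.thetaStar_le_theta hm₁ hm₂ ht) (h.theta_lt_pi_div_two hm₁ hm₂ ht)

lemma weight_theta_pos (h : IsDescendingArc g m₁ m₂ ξ θ α T) (hm₁ : 0 < m₁) (hm₂ : 0 < m₂)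
    (ht : t ∈ Icc 0 T) : 0 < weight m₁ m₂ (θ t) :=
  weight_pos ((thetaStar_pos hm₁ hm₂).trans_le (h.thetaStar_le_theta hm₁ hm₂ ht))
    (h.theta_lt_pi_div_two hm₁ hm₂ ht)

lemma weight_theta_le_cos (h : IsDescendingArc g m₁ m₂ ξ θ α T) (hm₁ : 0 < m₁) (hm₂ : 0 < m₂)
    (ht : t ∈ Icc 0 T) : weight m₁ m₂ (θ t) ≤ cos (θ t) :=
  weight_le_cos hm₂ (thetaStar_nonneg.trans (h.thetaStar_le_theta hm₁ hm₂ ht))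
    (h.theta_lt_pi_div_two hm₁ hm₂ ht).le

lemma cos_theta_pos (h : IsDescendingArc g m₁ m₂ ξ θ α T) (hm₁ : 0 < m₁) (hm₂ : 0 < m₂)
    (ht : t ∈ Icc 0 T) : 0 < cos (θ t) :=
  (h.weight_theta_pos hm₁ hm₂ ht).trans_le (h.weight_theta_le_cos hm₁ hm₂ ht)

lemma descentRate_nonneg (h : IsDescendingArc g m₁ m₂ ξ θ α T) (hm₁ : 0 < m₁) (hm₂ : 0 < m₂)
    (ht : t ∈ Icc 0 T) : 0 ≤ descentRate α t :=
  div_nonneg (neg_nonneg.2 (h.cos_alpha_nonpos hm₁ hm₂ ht)) (h.sin_alpha_pos hm₁ hm₂ ht).le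

lemma hasDerivAt_xi (h : IsDescendingArc g m₁ m₂ ξ θ α T) (hm₁ : 0 < m₁) (hm₂ : 0 < m₂)
    (ht : t ∈ Icc 0 T) :
    HasDerivAt ξ (-(descentRate α t * (sin (α t) * sin (2 * θ t)))) t := by
  have := (h.solution t).1
  rwa [cos_eq_neg_descentRate_mul_sin (h.sin_alpha_pos hm₁ hm₂ ht).ne', neg_mul,
    mul_assoc] at this

lemma descentRate_monotoneOn (h : IsDescendingArc g m₁ m₂ ξ θ α T) (hm₁ : 0 < m₁)
    (hm₂ : 0 < m₂) (hX : ∀ t ∈ Icc 0 T, 0 ≤ excess g m₁ m₂ (ξ t)) :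
    MonotoneOn (descentRate α) (Icc 0 T) :=
  monotoneOn_Icc_of_hasDerivAt
    (fun _ ht => h.solution.hasDerivAt_descentRate (h.sin_alpha_pos hm₁ hm₂ ht).ne')
    fun t ht => by
      have hsX := mul_nonneg (h.sin_two_theta_pos hm₁ hm₂ ht).le (hX t ht)
      have hul := mul_nonpos_of_nonneg_of_nonpos (h.descentRate_nonneg hm₁ hm₂ ht)
        (h.lfun_theta_nonpos hm₁ hm₂ ht)
      exact div_nonneg (by linarith) (h.sin_alpha_pos hm₁ hm₂ ht).le

lemma one_le_two_mul_sin_alpha_sq (h : IsDescendingArc g m₁ m₂ ξ θ α T) (hm₁ : 0 < m₁)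
    (hm₂ : 0 < m₂) (hX : ∀ t ∈ Icc 0 T, 0 ≤ excess g m₁ m₂ (ξ t)) (hT : descentRate α T = 1)
    (ht : t ∈ Icc 0 T) : 1 ≤ 2 * sin (α t) ^ 2 := by
  have hu₁ : descentRate α t ≤ 1 :=
    hT ▸ h.descentRate_monotoneOn hm₁ hm₂ hX ht (right_mem_Icc.2 h.time_pos.le) ht.2
  have hu₀ := h.descentRate_nonneg hm₁ hm₂ ht
  have hcos : cos (α t) ^ 2 ≤ sin (α t) ^ 2 := by
    rw [cos_eq_neg_descentRate_mul_sin (h.sin_alpha_pos hm₁ hm₂ ht).ne', neg_sq, mul_pow]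
    exact mul_le_of_le_one_left (sq_nonneg _) (pow_le_one₀ hu₀ hu₁)
  linarith [sin_sq_add_cos_sq (α t)]

lemma descentRate_zero (h : IsDescendingArc g m₁ m₂ ξ θ α T) : descentRate α 0 = 0 := by
  simp [descentRate, h.alpha_zero]

lemma weight_sq_le (h : IsDescendingArc g m₁ m₂ ξ θ α T) (hm₁ : 0 < m₁) (hm₂ : 0 < m₂) {δ : ℝ}
    (hX : ∀ t ∈ Icc 0 T, 0 ≤ excess g m₁ m₂ (ξ t) ∧ excess g m₁ m₂ (ξ t) ≤ δ)
    (hT : descentRate α T = 1) :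
    weight m₁ m₂ (θ T) ^ 2 ≤ 2 * δ * (θ T - thetaStar m₁ m₂) := by
  have hanti : AntitoneOn (fun t => descentRate α t * weight m₁ m₂ (θ t) ^ 2 -
      2 * δ * (θ t - thetaStar m₁ m₂)) (Icc 0 T) := by
    refine antitoneOn_Icc_of_hasDerivAt (fun t ht =>
      ((h.solution.hasDerivAt_descentRate (h.sin_alpha_pos hm₁ hm₂ ht).ne').mul
        ((hasDerivAt_weight_comp hm₁ hm₂ (h.solution t).2.1).pow 2)).sub
      (((h.solution t).2.1.sub_const _).const_mul _)) fun t ht => ?_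
    have hσ := h.sin_alpha_pos hm₁ hm₂ ht
    have hσ₂ := h.one_le_two_mul_sin_alpha_sq hm₁ hm₂ (fun t ht => (hX t ht).1) hT ht
    have hs := h.sin_two_theta_pos hm₁ hm₂ ht
    have hul := mul_nonpos_of_nonneg_of_nonpos (h.descentRate_nonneg hm₁ hm₂ ht)
      (h.lfun_theta_nonpos hm₁ hm₂ ht)
    have hW : weight m₁ m₂ (θ t) ^ 2 ≤ 1 := pow_le_one₀ (h.weight_theta_pos hm₁ hm₂ ht).le
      ((h.weight_theta_le_cos hm₁ hm₂ ht).trans (cos_le_one _))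
    obtain ⟨hX₀, hXδ⟩ := hX t ht
    set σ := sin (α t)
    set X := excess g m₁ m₂ (ξ t)
    set W := weight m₁ m₂ (θ t)
    have hXW : X * W ^ 2 ≤ 2 * δ * σ ^ 2 := by nlinarith [mul_le_of_le_one_right hX₀ hW]
    calc _ = (sin (2 * θ t) * (X * W ^ 2 - 2 * δ * σ ^ 2) +
          2 * (descentRate α t * lfun m₁ m₂ (θ t)) * W ^ 2 * (2 * σ ^ 2 - 1)) / σ := by
          simp only [Pi.pow_apply]; field_simp; ring
      _ ≤ 0 := by
        refine div_nonpos_of_nonpos_of_nonneg ?_ hσ.le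
        nlinarith [mul_nonpos_of_nonneg_of_nonpos hs.le (sub_nonpos.2 hXW),
          mul_nonpos_of_nonpos_of_nonneg (mul_nonpos_of_nonpos_of_nonneg hul (sq_nonneg W))
            (by linarith : (0 : ℝ) ≤ 2 * σ ^ 2 - 1)]
  have := hanti (left_mem_Icc.2 h.time_pos.le) (right_mem_Icc.2 h.time_pos.le) h.time_pos.le
  simp only [hT, h.theta_zero, h.descentRate_zero] at this
  linarith

lemma sin_thetaStar_pow_mul_cos_pow_le (h : IsDescendingArc g m₁ m₂ ξ θ α T) (hm₁ : 0 < m₁)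
    (hm₂ : 0 < m₂) {δ : ℝ}
    (hX : ∀ t ∈ Icc 0 T, 0 ≤ excess g m₁ m₂ (ξ t) ∧ excess g m₁ m₂ (ξ t) ≤ δ)
    (hT : descentRate α T = 1) :
    sin (thetaStar m₁ m₂) ^ (2 * m₁) * cos (θ T) ^ (2 * m₂) ≤ π * δ := by
  have hTmem := right_mem_Icc.2 h.time_pos.le
  have hθT := h.theta_lt_pi_div_two hm₁ hm₂ hTmem
  have hδ := (hX T hTmem).1.trans (hX T hTmem).2
  calc _ ≤ weight m₁ m₂ (θ T) ^ 2 :=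
        sin_thetaStar_pow_mul_le_weight_sq (h.thetaStar_le_theta hm₁ hm₂ hTmem) hθT.le
    _ ≤ 2 * δ * (θ T - thetaStar m₁ m₂) := h.weight_sq_le hm₁ hm₂ hX hT
    _ ≤ π * δ := by nlinarith [thetaStar_nonneg (m₁ := m₁) (m₂ := m₂)]

lemma excess_xi_pos (h : IsDescendingArc g m₁ m₂ ξ θ α T) (hg : 0 < g) (hm₁ : 0 < m₁)
    (hm₂ : 0 < m₂) (hT : threshold g m₁ m₂ < ξ T) (ht : t ∈ Icc 0 T) :
    0 < excess g m₁ m₂ (ξ t) :=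
  excess_pos hg (hT.trans_le (h.xi_antitoneOn hm₁ hm₂ ht (right_mem_Icc.2 h.time_pos.le) ht.2))

lemma excess_xi_le (h : IsDescendingArc g m₁ m₂ ξ θ α T) (hm₁ : 0 < m₁) (hm₂ : 0 < m₂)
    {ε : ℝ} (hξ₀ : ξ 0 = threshold g m₁ m₂ + ε) (ht : t ∈ Icc 0 T) :
    excess g m₁ m₂ (ξ t) ≤ excess g m₁ m₂ (threshold g m₁ m₂ + ε) :=
  excess_monotone (hξ₀ ▸ h.xi_antitoneOn hm₁ hm₂ (left_mem_Icc.2 h.time_pos.le) ht ht.1)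

lemma xi_zero_sub_le (h : IsDescendingArc g m₁ m₂ ξ θ α T) (hm₁ : 0 < m₁) (hm₂ : 0 < m₂)
    (hX : ∀ t ∈ Icc 0 T, 0 ≤ excess g m₁ m₂ (ξ t)) {t₁ : ℝ} (ht₁ : t₁ ∈ Icc 0 T) :
    ξ 0 - ξ t₁ ≤ descentRate α t₁ * (θ t₁ - thetaStar m₁ m₂) := by
  have hsub : Icc 0 t₁ ⊆ Icc 0 T := Icc_subset_Icc_right ht₁.2
  have hmono : MonotoneOn (fun t => descentRate α t₁ * (θ t - thetaStar m₁ m₂) + ξ t)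
      (Icc 0 t₁) := by
    refine monotoneOn_Icc_of_hasDerivAt (fun t ht =>
      (((h.solution t).2.1.sub_const _).const_mul _).add (h.hasDerivAt_xi hm₁ hm₂ (hsub ht)))
      fun t ht => ?_
    have hθ' := mul_pos (h.sin_alpha_pos hm₁ hm₂ (hsub ht))
      (h.sin_two_theta_pos hm₁ hm₂ (hsub ht))
    have hu := h.descentRate_monotoneOn hm₁ hm₂ hX (hsub ht) ht₁ ht.2
    nlinarith
  have := hmono (left_mem_Icc.2 ht₁.1) (right_mem_Icc.2 ht₁.1) ht₁.1
  simp only [h.theta_zero, sub_self, mul_zero, zero_add] at this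
  linarith

lemma mul_le_descentRate (h : IsDescendingArc g m₁ m₂ ξ θ α T) (hm₁ : 0 < m₁) (hm₂ : 0 < m₂)
    {q t₁ : ℝ} (hq : 0 ≤ q) (ht₁ : t₁ ∈ Icc 0 T)
    (hX : ∀ t ∈ Icc 0 t₁, q ≤ excess g m₁ m₂ (ξ t)) :
    q * (θ t₁ - thetaStar m₁ m₂) ≤ descentRate α t₁ := by
  have hsub : Icc 0 t₁ ⊆ Icc 0 T := Icc_subset_Icc_right ht₁.2
  have hmono : MonotoneOn (fun t => descentRate α t - q * (θ t - thetaStar m₁ m₂))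
      (Icc 0 t₁) := by
    refine monotoneOn_Icc_of_hasDerivAt (fun t ht =>
      (h.solution.hasDerivAt_descentRate (h.sin_alpha_pos hm₁ hm₂ (hsub ht)).ne').sub
        (((h.solution t).2.1.sub_const _).const_mul _)) fun t ht => ?_
    have hσ := h.sin_alpha_pos hm₁ hm₂ (hsub ht)
    have hs := h.sin_two_theta_pos hm₁ hm₂ (hsub ht)
    have hul := mul_nonpos_of_nonneg_of_nonpos (h.descentRate_nonneg hm₁ hm₂ (hsub ht))
      (h.lfun_theta_nonpos hm₁ hm₂ (hsub ht))
    have hσ₁ := sin_sq_le_one (α t)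
    have hXq : 0 ≤ excess g m₁ m₂ (ξ t) - q * sin (α t) ^ 2 := by nlinarith [hX t ht]
    calc (0 : ℝ) ≤ (sin (2 * θ t) * (excess g m₁ m₂ (ξ t) - q * sin (α t) ^ 2) -
          2 * (descentRate α t * lfun m₁ m₂ (θ t))) / sin (α t) := by
          apply div_nonneg _ hσ.le; nlinarith
      _ = _ := by field_simp; ring
  have := hmono (left_mem_Icc.2 ht₁.1) (right_mem_Icc.2 ht₁.1) ht₁.1
  simp only [h.theta_zero, sub_self, mul_zero, h.descentRate_zero] at this
  linarith

lemma seedConst_mul_le_descentRate (h : IsDescendingArc g m₁ m₂ ξ θ α T) (hg : 0 < g)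
    (hm₁ : 0 < m₁) (hm₂ : 0 < m₂) {ε t₁ : ℝ} (hξ₀ : ξ 0 = threshold g m₁ m₂ + ε)
    (hT : threshold g m₁ m₂ < ξ T) (ht₁ : t₁ ∈ Icc 0 T) (hθt₁ : θ t₁ = thetaOne m₁ m₂) :
    seedConst g m₁ m₂ * ε ≤ descentRate α t₁ := by
  set c := 4 * mconst g m₁ m₂ / g
  set d := thetaOne m₁ m₂ - thetaStar m₁ m₂
  have hc : 0 < c := by have := mconst_pos (m₁ := m₁) (m₂ := m₂) hg; positivity
  have hd : 0 < d := sub_pos.2 thetaStar_lt_thetaOne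
  have hξ := h.xi_antitoneOn hm₁ hm₂
  have ha : 0 ≤ ξ t₁ - threshold g m₁ m₂ := by
    linarith [hξ ht₁ (right_mem_Icc.2 h.time_pos.le) ht₁.2]
  have hdrop : ε - (ξ t₁ - threshold g m₁ m₂) ≤ descentRate α t₁ * d := by
    have := h.xi_zero_sub_le hm₁ hm₂ (fun t ht => (h.excess_xi_pos hg hm₁ hm₂ hT ht).le) ht₁
    rw [hθt₁] at this
    linarith
  have hgrowth : c * (ξ t₁ - threshold g m₁ m₂) * d ≤ descentRate α t₁ := by
    have := h.mul_le_descentRate hm₁ hm₂ (by positivity) ht₁ fun t ht =>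
      calc c * (ξ t₁ - threshold g m₁ m₂) ≤ c * (ξ t - threshold g m₁ m₂) := by
            gcongr; exact hξ (Icc_subset_Icc_right ht₁.2 ht) ht₁ ht.2
        _ ≤ excess g m₁ m₂ (ξ t) := mul_sub_threshold_le_excess hg _
    rwa [hθt₁] at this
  rw [seedConst, div_mul_eq_mul_div, div_le_iff₀ (by positivity)]
  nlinarith [mul_le_mul_of_nonneg_left hdrop (by positivity : 0 ≤ c * d)]

lemma descentRate_mul_weight_monotoneOn (h : IsDescendingArc g m₁ m₂ ξ θ α T) (hm₁ : 0 < m₁)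
    (hm₂ : 0 < m₂) (hX : ∀ t ∈ Icc 0 T, 0 ≤ excess g m₁ m₂ (ξ t)) :
    MonotoneOn (fun t => descentRate α t * weight m₁ m₂ (θ t)) (Icc 0 T) := by
  refine monotoneOn_Icc_of_hasDerivAt (fun t ht =>
    (h.solution.hasDerivAt_descentRate (h.sin_alpha_pos hm₁ hm₂ ht).ne').mul
      (hasDerivAt_weight_comp hm₁ hm₂ (h.solution t).2.1)) fun t ht => ?_
  have hσ := h.sin_alpha_pos hm₁ hm₂ ht
  have hs := h.sin_two_theta_pos hm₁ hm₂ ht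
  have hW := h.weight_theta_pos hm₁ hm₂ ht
  have hul := mul_nonpos_of_nonneg_of_nonpos (h.descentRate_nonneg hm₁ hm₂ ht)
    (h.lfun_theta_nonpos hm₁ hm₂ ht)
  have hσ₁ : 0 ≤ 1 - sin (α t) ^ 2 := sub_nonneg.2 (sin_sq_le_one (α t))
  calc (0 : ℝ) ≤ weight m₁ m₂ (θ t) * (sin (2 * θ t) * excess g m₁ m₂ (ξ t) -
        2 * (descentRate α t * lfun m₁ m₂ (θ t)) * (1 - sin (α t) ^ 2)) / sin (α t) := by
        apply div_nonneg _ hσ.le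
        exact mul_nonneg hW.le (by nlinarith [mul_nonneg hs.le (hX t ht),
          mul_nonpos_of_nonpos_of_nonneg hul hσ₁])
    _ = _ := by field_simp; ring

lemma descentRate_mul_weight_mul_log_le (h : IsDescendingArc g m₁ m₂ ξ θ α T) (hm₁ : 0 < m₁)
    (hm₂ : 0 < m₂) (hX : ∀ t ∈ Icc 0 T, 0 ≤ excess g m₁ m₂ (ξ t)) {t₁ : ℝ}
    (ht₁ : t₁ ∈ Icc 0 T) :
    descentRate α t₁ * weight m₁ m₂ (θ t₁) * (log (cos (θ t₁)) - log (cos (θ T))) ≤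
      ξ t₁ - ξ T := by
  set k := descentRate α t₁ * weight m₁ m₂ (θ t₁)
  have hsub : Icc t₁ T ⊆ Icc 0 T := Icc_subset_Icc_left ht₁.1
  have hcos : ∀ t ∈ Icc t₁ T, 0 < cos (θ t) := fun t ht => h.cos_theta_pos hm₁ hm₂ (hsub ht)
  have hk : 0 ≤ k :=
    mul_nonneg (h.descentRate_nonneg hm₁ hm₂ ht₁) (h.weight_theta_pos hm₁ hm₂ ht₁).le
  have hmono : MonotoneOn (fun t => k * log (cos (θ t)) - ξ t) (Icc t₁ T) := by
    refine monotoneOn_Icc_of_hasDerivAt (fun t ht =>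
      (((h.solution t).2.1.cos.log (hcos t ht).ne').const_mul k).sub
        (h.hasDerivAt_xi hm₁ hm₂ (hsub ht))) fun t ht => ?_
    have hk_le : k ≤ descentRate α t * cos (θ t) :=
      (h.descentRate_mul_weight_monotoneOn hm₁ hm₂ hX ht₁ (hsub ht) ht.1).trans
        (mul_le_mul_of_nonneg_left (h.weight_theta_le_cos hm₁ hm₂ (hsub ht))
          (h.descentRate_nonneg hm₁ hm₂ (hsub ht)))
    have hθ' := mul_pos (h.sin_alpha_pos hm₁ hm₂ (hsub ht))
      (h.sin_two_theta_pos hm₁ hm₂ (hsub ht))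
    calc (0 : ℝ) ≤ sin (α t) * sin (2 * θ t) *
          (descentRate α t * cos (θ t) - k * sin (θ t)) / cos (θ t) := by
          refine div_nonneg (mul_nonneg hθ'.le ?_) (hcos t ht).le
          nlinarith [sin_le_one (θ t), mul_le_mul_of_nonneg_left (sin_le_one (θ t)) hk]
      _ = _ := by have := (hcos t ht).ne'; field_simp; ring
  have := hmono (left_mem_Icc.2 ht₁.2) (right_mem_Icc.2 ht₁.2) ht₁.2
  simp only at this
  linarith

lemma log_cos_theta_le (h : IsDescendingArc g m₁ m₂ ξ θ α T) (hm₁ : 0 < m₁) (hm₂ : 0 < m₂)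
    {δ : ℝ} (hX : ∀ t ∈ Icc 0 T, 0 ≤ excess g m₁ m₂ (ξ t) ∧ excess g m₁ m₂ (ξ t) ≤ δ)
    (hT : descentRate α T = 1) :
    log (cos (θ T)) ≤ log (π * δ / sin (thetaStar m₁ m₂) ^ (2 * m₁)) / (2 * m₂) := by
  have hcos := h.cos_theta_pos hm₁ hm₂ (right_mem_Icc.2 h.time_pos.le)
  have hK := pow_pos (sin_thetaStar_pos hm₁ hm₂) (2 * m₁)
  rw [le_div_iff₀ (by positivity)]
  calc log (cos (θ T)) * (2 * m₂) = log (cos (θ T) ^ (2 * m₂)) := by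
        rw [log_pow]; push_cast; ring
    _ ≤ log (π * δ / sin (thetaStar m₁ m₂) ^ (2 * m₁)) := by
        refine log_le_log (by positivity) ?_
        rw [le_div_iff₀ hK, mul_comm]
        exact h.sin_thetaStar_pow_mul_cos_pow_le hm₁ hm₂ hX hT

lemma thetaOne_lt_theta (h : IsDescendingArc g m₁ m₂ ξ θ α T) (hm₁ : 0 < m₁) (hm₂ : 0 < m₂)
    (hlog : log (cos (θ T)) < log (cos (thetaOne m₁ m₂))) : thetaOne m₁ m₂ < θ T := by
  have hTmem := right_mem_Icc.2 h.time_pos.le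
  have hθT₀ := thetaStar_nonneg.trans (h.thetaStar_le_theta hm₁ hm₂ hTmem)
  have hθT := h.theta_lt_pi_div_two hm₁ hm₂ hTmem
  have hθ₁₀ := thetaStar_nonneg.trans_lt (thetaStar_lt_thetaOne (m₁ := m₁) (m₂ := m₂))
  have hθ₁ := thetaOne_lt_pi_div_two (m₁ := m₁) (m₂ := m₂)
  refine (strictAntiOn_cos.lt_iff_gt ⟨hθT₀, by linarith⟩ ⟨hθ₁₀.le, by linarith⟩).1 ?_
  exact (log_lt_log_iff (h.cos_theta_pos hm₁ hm₂ hTmem)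
    (cos_pos_of_mem_Ioo ⟨by linarith, hθ₁⟩)).1 hlog

theorem xi_le_threshold (h : IsDescendingArc g m₁ m₂ ξ θ α T) (hg : 0 < g) (hm₁ : 0 < m₁)
    (hm₂ : 0 < m₂) {ε : ℝ} (hξ₀ : ξ 0 = threshold g m₁ m₂ + ε) (hT : descentRate α T = 1)
    (hsmall : IsSmallExcess g m₁ m₂ (excess g m₁ m₂ (threshold g m₁ m₂ + ε))) :
    ξ T ≤ threshold g m₁ m₂ := by
  by_contra! hL
  set θ₁ := thetaOne m₁ m₂
  set B := log (cos θ₁) - log (π * excess g m₁ m₂ (threshold g m₁ m₂ + ε) /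
    sin (thetaStar m₁ m₂) ^ (2 * m₁)) / (2 * m₂)
  have hTmem := right_mem_Icc.2 h.time_pos.le
  have hX : ∀ t ∈ Icc 0 T, 0 < excess g m₁ m₂ (ξ t) := fun t ht =>
    h.excess_xi_pos hg hm₁ hm₂ hL ht
  have hlogT := h.log_cos_theta_le hm₁ hm₂
    (fun t ht => ⟨(hX t ht).le, h.excess_xi_le hm₁ hm₂ hξ₀ ht⟩) hT
  have hW₁ : 0 < weight m₁ m₂ θ₁ := weight_thetaOne_pos
  have hB : 0 < B := pos_of_mul_pos_right (one_pos.trans_le hsmall)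
    (mul_pos (seedConst_pos hg) hW₁).le
  have hθ₁T := h.thetaOne_lt_theta hm₁ hm₂ (by linarith)
  obtain ⟨t₁, ht₁, hθt₁⟩ := intermediate_value_Icc h.time_pos.le
    h.solution.continuous_theta.continuousOn ⟨h.theta_zero ▸ thetaStar_lt_thetaOne.le, hθ₁T.le⟩
  have hseed := h.seedConst_mul_le_descentRate hg hm₁ hm₂ hξ₀ hL ht₁ hθt₁
  have hdrop := h.descentRate_mul_weight_mul_log_le hm₁ hm₂ (fun t ht => (hX t ht).le) ht₁
  rw [hθt₁] at hdrop
  have hξ := h.xi_antitoneOn hm₁ hm₂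
  have hξt₁ := hξ (left_mem_Icc.2 h.time_pos.le) ht₁ ht₁.1
  have hε : 0 < ε := by linarith [hξ (left_mem_Icc.2 h.time_pos.le) hTmem h.time_pos.le]
  refine lt_irrefl ε ?_
  calc ε ≤ seedConst g m₁ m₂ * ε * weight m₁ m₂ θ₁ * B := by
        have : 1 ≤ seedConst g m₁ m₂ * weight m₁ m₂ θ₁ * B := hsmall
        nlinarith
    _ ≤ descentRate α t₁ * weight m₁ m₂ θ₁ * B := by gcongr
    _ ≤ descentRate α t₁ * weight m₁ m₂ θ₁ * (log (cos θ₁) - log (cos (θ T))) :=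
        mul_le_mul_of_nonneg_left (by linarith)
          (mul_nonneg ((mul_pos (seedConst_pos hg) hε).le.trans hseed) hW₁.le)
    _ ≤ ξ t₁ - ξ T := hdrop
    _ < ε := by linarith

end IsDescendingArc

lemma eventually_isSmallExcess {g m₁ m₂ : ℕ} (hg : 0 < g) (hm₁ : 0 < m₁) (hm₂ : 0 < m₂) :
    ∀ᶠ ε in 𝓝[>] 0, IsSmallExcess g m₁ m₂ (excess g m₁ m₂ (threshold g m₁ m₂ + ε)) := by
  have hK := pow_pos (sin_thetaStar_pos hm₁ hm₂) (2 * m₁)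
  have hratio : Tendsto (fun ε => π * excess g m₁ m₂ (threshold g m₁ m₂ + ε) /
      sin (thetaStar m₁ m₂) ^ (2 * m₁)) (𝓝[>] 0) (𝓝[>] 0) := by
    refine tendsto_nhdsWithin_iff.2 ⟨?_, eventually_nhdsWithin_of_forall fun ε hε =>
      div_pos (mul_pos pi_pos (excess_pos hg (lt_add_of_pos_right _ hε))) hK⟩
    have hcont : Continuous fun ε => π * excess g m₁ m₂ (threshold g m₁ m₂ + ε) /
        sin (thetaStar m₁ m₂) ^ (2 * m₁) := by
      unfold excess; fun_prop
    have h₀ : excess g m₁ m₂ (threshold g m₁ m₂) = 0 := by simp [excess_eq hg]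
    simpa [h₀] using (hcont.tendsto 0).mono_left nhdsWithin_le_nhds
  have hlog : Tendsto (fun x => seedConst g m₁ m₂ * weight m₁ m₂ (thetaOne m₁ m₂) *
      (log (cos (thetaOne m₁ m₂)) - log x / (2 * m₂))) (𝓝[>] 0) atTop := by
    refine Tendsto.const_mul_atTop (mul_pos (seedConst_pos hg) weight_thetaOne_pos) ?_
    simp_rw [sub_eq_add_neg]
    exact tendsto_atTop_add_const_left _ _ (tendsto_neg_atBot_atTop.comp
      (tendsto_log_nhdsGT_zero.atBot_div_const (by positivity)))
  exact (hlog.comp hratio).eventually_ge_atTop 1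

/-- Lemma 4.9: for `ε` small enough, if `ξ₀ = (g/4) ln m + ε` is of type 1 and
`T₁ > 0` is a time with `ξ'(T₁)/θ'(T₁) = -1` while `ξ' < 0` and `θ' > 0` on
`(0, T₁]`, then `ξ(T₁) ≤ (g/4) ln m`. -/
theorem stmt19 (g m₁ m₂ : ℕ) (hg : g = 1 ∨ g = 2 ∨ g = 3 ∨ g = 4 ∨ g = 6)
    (hm₁ : 0 < m₁) (hm₂ : 0 < m₂)
    (Ξ Θ A : ℝ → ℝ → ℝ) (hfam : IsShootingFamily g m₁ m₂ Ξ Θ A) :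
    ∃ ε₀ > (0 : ℝ), ∀ ε : ℝ, 0 < ε → ε < ε₀ →
      ∀ ξ₀ : ℝ, ξ₀ = (g : ℝ) / 4 * Real.log (mconst g m₁ m₂) + ε →
        Type1 m₁ m₂ Ξ Θ A ξ₀ →
        ∀ T₁ > (0 : ℝ),
          ((Real.cos (A ξ₀ T₁) * Real.sin (2 * Θ ξ₀ T₁)) /
              (Real.sin (A ξ₀ T₁) * Real.sin (2 * Θ ξ₀ T₁)) = -1 ∧
            ∀ t ∈ Set.Ioc (0 : ℝ) T₁,
              Real.cos (A ξ₀ t) * Real.sin (2 * Θ ξ₀ t) < 0 ∧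
              0 < Real.sin (A ξ₀ t) * Real.sin (2 * Θ ξ₀ t)) →
          Ξ ξ₀ T₁ ≤ (g : ℝ) / 4 * Real.log (mconst g m₁ m₂) := by
  have hg₀ : 0 < g := by rcases hg with rfl | rfl | rfl | rfl | rfl <;> norm_num
  obtain ⟨ε₀, hε₀, hsmall⟩ :=
    mem_nhdsGT_iff_exists_Ioo_subset.1 (eventually_isSmallExcess hg₀ hm₁ hm₂)
  refine ⟨ε₀, hε₀, fun ε hε hεε₀ ξ₀ hξ₀ _ T₁ hT₁ ⟨hratio, hsign⟩ => ?_⟩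
  obtain ⟨hsol, hΞ₀, hΘ₀, hA₀⟩ := hfam ξ₀
  have h : IsDescendingArc g m₁ m₂ (Ξ ξ₀) (Θ ξ₀) (A ξ₀) T₁ := ⟨hsol, hΘ₀, hA₀, hT₁, hsign⟩
  have hs := h.sin_two_theta_pos hm₁ hm₂ (right_mem_Icc.2 hT₁.le)
  refine h.xi_le_threshold hg₀ hm₁ hm₂ (hΞ₀.trans hξ₀) ?_ (hsmall ⟨hε, hεε₀⟩)
  rw [descentRate, neg_div, ← mul_div_mul_right _ _ hs.ne', hratio, neg_neg]
end
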